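/- Let V be a 6-dimensional complex vector space and ω ∈ O₅, with kernel line α_ω and associated hyperplane A_ω. If Λ ≠ Λ' are 3-dimensional subspaces of V with π_ω(Λ) = π_ω(Λ'), then Λ ∩ Λ' = α_ω and Λ + Λ' = A_ω. -/

import Mathlib

/-! Let `u, u'` be Plücker vectors of `Λ, Λ'`. Since `ω` is not decomposable and `Λ ≠ Λ'`,
`π_ω(Λ) = π_ω(Λ')` means `ω = a u + b u'` with `a, b ≠ 0`. If `Λ ∩ Λ'` were a plane with
Plücker vector `x₀ ∧ x₁`, then `u = y ∧ x₀ ∧ x₁`, `u' = y' ∧ x₀ ∧ x₁` and `ω` would be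
decomposable, so `dim (Λ ∩ Λ') ≤ 1`. If `α ∉ Λ`, then `α ∧ ω = 0` makes `α ∧ u` and `α ∧ u'`
proportional, so `ℂα + Λ = ℂα + Λ'` is a 4-space containing `Λ + Λ'`, which is too small;
hence `Λ ∩ Λ' = ℂα` and `dim (Λ + Λ') = 5`. Finally, if `f` does not vanish on `Λ`, then
`f ⌟ u` is a nonzero Plücker vector of the plane `Λ ∩ ker f`, and `f ⌟ ω = 0` makes it
proportional to that of `Λ' ∩ ker f`; the two planes would then coincide inside `Λ ∩ Λ'`.
So `Λ + Λ' ≤ ker f`, and both have dimension 5. -/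

open ExteriorAlgebra

/-- Membership in the Segre orbit `O₅`. -/
def InO5 {V : Type*} [AddCommGroup V] [Module ℂ V] (ω : ExteriorAlgebra ℂ V) : Prop :=
  ω ∈ ⋀[ℂ]^3 V ∧ (¬ ∃ a b c : V, ω = ι ℂ a * ι ℂ b * ι ℂ c) ∧
    ∃ v : V, v ≠ 0 ∧ ι ℂ v * ω = 0

/-- `u` is a Plücker vector of the `m`-dimensional subspace `Λ`. -/
def IsPluckerVector {V : Type*} [AddCommGroup V] [Module ℂ V] (m : ℕ)
    (Λ : Submodule ℂ V) (u : ExteriorAlgebra ℂ V) : Prop :=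
  ∃ v : Fin m → V, Submodule.span ℂ (Set.range v) = Λ ∧ u = ιMulti ℂ m v

/-- The images of `u` and `u'` in the quotient `(⋀V)/Z` span the same line; this expresses
`π_Z(Λ) = π_Z(Λ')` for subspaces with Plücker vectors `u` and `u'`. -/
def ProjEq {V : Type*} [AddCommGroup V] [Module ℂ V] (Z : Submodule ℂ (ExteriorAlgebra ℂ V))
    (u u' : ExteriorAlgebra ℂ V) : Prop :=
  Submodule.span ℂ {Z.mkQ u} = Submodule.span ℂ {Z.mkQ u'}

section LinearAlgebra

variable {𝕜 M : Type*} [Field 𝕜] [AddCommGroup M] [Module 𝕜 M]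

theorem eq_neg_div_smul_of_smul_add_smul_eq_zero {a b : 𝕜} {x y : M} (hb : b ≠ 0)
    (h : a • x + b • y = 0) : y = -(a / b) • x := by
  have := congrArg (b⁻¹ • ·) h
  simp only [smul_add, smul_zero, inv_smul_smul₀ hb] at this
  linear_combination (norm := module) this

theorem exists_eq_smul_add_smul_of_span_mkQ_eq {ω u u' : M}
    (h : Submodule.span 𝕜 {(𝕜 ∙ ω).mkQ u} = Submodule.span 𝕜 {(𝕜 ∙ ω).mkQ u'})
    (hu' : u' ∉ 𝕜 ∙ ω) (hne : ∀ c : 𝕜, u' ≠ c • u) :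
    ∃ a b : 𝕜, a ≠ 0 ∧ b ≠ 0 ∧ ω = a • u + b • u' := by
  obtain ⟨c, hc⟩ := Submodule.mem_span_singleton.mp (h ▸ Submodule.mem_span_singleton_self _ :
    (𝕜 ∙ ω).mkQ u' ∈ Submodule.span 𝕜 {(𝕜 ∙ ω).mkQ u})
  rw [← map_smul] at hc
  obtain ⟨d, hd⟩ := Submodule.mem_span_singleton.mp ((Submodule.Quotient.eq _).mp hc.symm)
  have hd0 : d ≠ 0 := by
    rintro rfl
    exact hne c (sub_eq_zero.mp (by rw [← hd, zero_smul]))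
  have hc0 : c ≠ 0 := by
    rintro rfl
    rw [zero_smul, sub_zero] at hd
    exact hu' (hd ▸ Submodule.smul_mem _ d (Submodule.mem_span_singleton_self ω))
  refine ⟨-(c / d), d⁻¹, by simp [hc0, hd0], inv_ne_zero hd0, ?_⟩
  have := congrArg (d⁻¹ • ·) hd
  simp only [inv_smul_smul₀ hd0] at this
  rw [this]
  module

theorem Submodule.finrank_inf_ker_add_one {Λ : Submodule 𝕜 M} [FiniteDimensional 𝕜 Λ]
    {f : Module.Dual 𝕜 M} (hf : ¬Λ ≤ LinearMap.ker f) :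
    Module.finrank 𝕜 ↥(Λ ⊓ LinearMap.ker f) + 1 = Module.finrank 𝕜 Λ := by
  have hg : f.domRestrict Λ ≠ 0 := fun h ↦ hf fun x hx ↦ by
    simpa using LinearMap.congr_fun h ⟨x, hx⟩
  rw [← Module.Dual.finrank_ker_add_one_of_ne_zero hg, LinearMap.ker_domRestrict,
    ← Submodule.map_comap_subtype, Submodule.finrank_map_subtype_eq]

end LinearAlgebra

namespace ExteriorAlgebra

variable {𝕜 V : Type*} [Field 𝕜] [AddCommGroup V] [Module 𝕜 V]

theorem ι_mul_ιMulti_eq_ιMulti_cons {n : ℕ} (x : V) (v : Fin n → V) :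
    ι 𝕜 x * ιMulti 𝕜 n v = ιMulti 𝕜 (n + 1) (Fin.cons x v) := by
  rw [ιMulti_succ_apply, Fin.cons_zero]
  rfl

theorem ιMulti_two (v : Fin 2 → V) : ιMulti 𝕜 2 v = ι 𝕜 (v 0) * ι 𝕜 (v 1) := by
  rw [ιMulti_succ_apply, ιMulti_succ_apply, ιMulti_zero_apply, mul_one]
  rfl

theorem ιMulti_three (v : Fin 3 → V) : ιMulti 𝕜 3 v = ι 𝕜 (v 0) * ι 𝕜 (v 1) * ι 𝕜 (v 2) := by
  rw [ιMulti_succ_apply, ιMulti_succ_apply, ιMulti_succ_apply, ιMulti_zero_apply, mul_one,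
    mul_assoc]
  rfl

theorem _root_.exteriorPower.ιMulti_ne_zero_of_linearIndependent {n : ℕ} {v : Fin n → V}
    (hv : LinearIndependent 𝕜 v) : exteriorPower.ιMulti 𝕜 n v ≠ 0 := by
  have := (exteriorPower.ιMulti_family_linearIndependent_field (n := n) hv).ne_zero
    (Set.powersetCard.ofFinEmbEquiv (OrderIso.refl _).toOrderEmbedding)
  simpa [exteriorPower.ιMulti_family] using this

theorem ιMulti_ne_zero_of_linearIndependent {n : ℕ} {v : Fin n → V}
    (hv : LinearIndependent 𝕜 v) : ιMulti 𝕜 n v ≠ 0 := by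
  rw [← exteriorPower.ιMulti_apply_coe]
  exact fun h ↦
    exteriorPower.ιMulti_ne_zero_of_linearIndependent hv (ZeroMemClass.coe_eq_zero.mp h)

theorem ι_mul_ιMulti_eq_zero_iff {n : ℕ} {v : Fin n → V} (hv : LinearIndependent 𝕜 v) (x : V) :
    ι 𝕜 x * ιMulti 𝕜 n v = 0 ↔ x ∈ Submodule.span 𝕜 (Set.range v) := by
  rw [ι_mul_ιMulti_eq_ιMulti_cons]
  constructor
  · intro h
    by_contra hx
    exact ιMulti_ne_zero_of_linearIndependent (linearIndependent_finCons.mpr ⟨hv, hx⟩) h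
  · intro hx
    exact AlternatingMap.map_linearDependent _ _ fun h ↦ (linearIndependent_finCons.mp h).2 hx

theorem exists_ιMulti_eq_smul_of_mem_span {n : ℕ} {x v : Fin n → V}
    (hx : LinearIndependent 𝕜 x) (hv : ∀ j, v j ∈ Submodule.span 𝕜 (Set.range x)) :
    ∃ k : 𝕜, ιMulti 𝕜 n v = k • ιMulti 𝕜 n x := by
  set W := Submodule.span 𝕜 (Set.range x)
  have : FiniteDimensional 𝕜 W := FiniteDimensional.span_of_finite 𝕜 (Set.finite_range x)
  let x' : Fin n → W := fun j ↦ ⟨x j, Submodule.subset_span (Set.mem_range_self j)⟩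
  let v' : Fin n → W := fun j ↦ ⟨v j, hv j⟩
  have hW : Module.finrank 𝕜 (⋀[𝕜]^n W) = 1 := by
    rw [exteriorPower.finrank_eq, finrank_span_eq_card hx, Fintype.card_fin, Nat.choose_self]
  obtain ⟨k, hk⟩ := (finrank_eq_one_iff_of_nonzero' _
    (exteriorPower.ιMulti_ne_zero_of_linearIndependent (LinearIndependent.of_comp W.subtype hx :
      LinearIndependent 𝕜 x'))).mp hW (exteriorPower.ιMulti 𝕜 n v')
  refine ⟨k, ?_⟩
  have := congrArg (fun w ↦ (exteriorPower.map n W.subtype w : ExteriorAlgebra 𝕜 V)) hk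
  simp only [map_smul, exteriorPower.map_apply_ιMulti, Submodule.coe_subtype, SetLike.val_smul,
    exteriorPower.ιMulti_apply_coe] at this
  exact this.symm

end ExteriorAlgebra

namespace IsPluckerVector

variable {V : Type*} [AddCommGroup V] [Module ℂ V] {m : ℕ} {Λ Λ' : Submodule ℂ V}
  {u u' : ExteriorAlgebra ℂ V}

theorem finiteDimensional (hu : IsPluckerVector m Λ u) : FiniteDimensional ℂ Λ := by
  obtain ⟨v, rfl, -⟩ := hu
  exact FiniteDimensional.span_of_finite ℂ (Set.finite_range v)

theorem exists_linearIndependent (hu : IsPluckerVector m Λ u) (hΛ : Module.finrank ℂ Λ = m) :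
    ∃ v : Fin m → V, LinearIndependent ℂ v ∧ Submodule.span ℂ (Set.range v) = Λ ∧
      u = ιMulti ℂ m v := by
  obtain ⟨v, hvΛ, rfl⟩ := hu
  refine ⟨v, ?_, hvΛ, rfl⟩
  rw [linearIndependent_iff_card_eq_finrank_span, Set.finrank, hvΛ, hΛ, Fintype.card_fin]

theorem ne_zero (hu : IsPluckerVector m Λ u) (hΛ : Module.finrank ℂ Λ = m) : u ≠ 0 := by
  obtain ⟨v, hv, -, rfl⟩ := hu.exists_linearIndependent hΛ
  exact ιMulti_ne_zero_of_linearIndependent hv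

theorem ι_mul_eq_zero_iff (hu : IsPluckerVector m Λ u) (hΛ : Module.finrank ℂ Λ = m) (x : V) :
    ι ℂ x * u = 0 ↔ x ∈ Λ := by
  obtain ⟨v, hv, rfl, rfl⟩ := hu.exists_linearIndependent hΛ
  exact ι_mul_ιMulti_eq_zero_iff hv x

theorem exists_eq_smul (hu : IsPluckerVector m Λ u) (hΛ : Module.finrank ℂ Λ = m)
    (hu' : IsPluckerVector m Λ u') : ∃ k : ℂ, u' = k • u := by
  obtain ⟨v, hv, hvΛ, rfl⟩ := hu.exists_linearIndependent hΛ
  obtain ⟨v', hv'Λ, rfl⟩ := hu'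
  exact exists_ιMulti_eq_smul_of_mem_span hv
    fun j ↦ hvΛ ▸ hv'Λ ▸ Submodule.subset_span (Set.mem_range_self j)

theorem eq_of_eq_smul (hu : IsPluckerVector m Λ u) (hΛ : Module.finrank ℂ Λ = m)
    (hu' : IsPluckerVector m Λ' u') (hΛ' : Module.finrank ℂ Λ' = m) {c : ℂ} (h : u' = c • u) :
    Λ = Λ' := by
  have hc : c ≠ 0 := by
    rintro rfl
    exact hu'.ne_zero hΛ' (by rw [h, zero_smul])
  ext x
  rw [← hu.ι_mul_eq_zero_iff hΛ, ← hu'.ι_mul_eq_zero_iff hΛ', h, mul_smul_comm,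
    smul_eq_zero_iff_right hc]

theorem ι_mul (hu : IsPluckerVector m Λ u) (hΛ : Module.finrank ℂ Λ = m) {x : V} (hx : x ∉ Λ) :
    IsPluckerVector (m + 1) (ℂ ∙ x ⊔ Λ) (ι ℂ x * u) ∧ Module.finrank ℂ ↥(ℂ ∙ x ⊔ Λ) = m + 1 := by
  obtain ⟨v, hv, rfl, rfl⟩ := hu.exists_linearIndependent hΛ
  have hspan : Submodule.span ℂ (Set.range (Fin.cons x v : Fin (m + 1) → V)) =
      ℂ ∙ x ⊔ Submodule.span ℂ (Set.range v) := by
    rw [Fin.range_cons, Submodule.span_insert]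
  refine ⟨⟨Fin.cons x v, hspan, ι_mul_ιMulti_eq_ιMulti_cons x v⟩, ?_⟩
  rw [← hspan, finrank_span_eq_card (linearIndependent_finCons.mpr ⟨hv, hx⟩), Fintype.card_fin]

theorem exists_eq_ι_mul (hu : IsPluckerVector (m + 1) Λ u) (hΛ : Module.finrank ℂ Λ = m + 1)
    {L : Submodule ℂ V} {w : ExteriorAlgebra ℂ V} (hw : IsPluckerVector m L w)
    (hL : Module.finrank ℂ L = m) (hLΛ : L ≤ Λ) : ∃ y ∈ Λ, y ∉ L ∧ u = ι ℂ y * w := by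
  obtain ⟨y, hyΛ, hyL⟩ := SetLike.exists_of_lt (lt_of_le_of_ne hLΛ (by grind))
  obtain ⟨hyw, hfin⟩ := hw.ι_mul hL hyL
  have := hu.finiteDimensional
  have hΛ_eq : ℂ ∙ y ⊔ L = Λ :=
    Submodule.eq_of_le_of_finrank_eq (sup_le ((Submodule.span_singleton_le_iff_mem y Λ).2 hyΛ) hLΛ)
      (by rw [hfin, hΛ])
  obtain ⟨k, rfl⟩ := (hΛ_eq ▸ hyw).exists_eq_smul hΛ hu
  have hk : k ≠ 0 := by
    rintro rfl
    exact hu.ne_zero hΛ (zero_smul _ _)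
  exact ⟨k • y, Λ.smul_mem k hyΛ, (Submodule.smul_mem_iff L hk).not.2 hyL, by
    rw [map_smul, smul_mul_assoc]⟩

theorem exists_of_finrank_eq (L : Submodule ℂ V) [FiniteDimensional ℂ L]
    (hL : Module.finrank ℂ L = m) : ∃ w, IsPluckerVector m L w := by
  let b := Module.finBasisOfFinrankEq ℂ L hL
  refine ⟨_, L.subtype ∘ b, ?_, rfl⟩
  rw [Set.range_comp, ← Submodule.map_span, b.span_eq, Submodule.map_top, Submodule.range_subtype]

theorem exists_eq_ι_mul_ι (hu : IsPluckerVector 2 Λ u) : ∃ a b : V, u = ι ℂ a * ι ℂ b := by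
  obtain ⟨v, -, rfl⟩ := hu
  exact ⟨v 0, v 1, ιMulti_two v⟩

theorem notMem_span_singleton {ω : ExteriorAlgebra ℂ V} (hu : IsPluckerVector 3 Λ u)
    (hΛ : Module.finrank ℂ Λ = 3) (hω : ¬∃ a b c : V, ω = ι ℂ a * ι ℂ b * ι ℂ c) :
    u ∉ ℂ ∙ ω := by
  intro h
  obtain ⟨c, hc⟩ := Submodule.mem_span_singleton.mp h
  have hc0 : c ≠ 0 := by
    rintro rfl
    exact hu.ne_zero hΛ (by rw [← hc, zero_smul])
  obtain ⟨v, -, rfl⟩ := hu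
  refine hω ⟨c⁻¹ • v 0, v 1, v 2, ?_⟩
  rw [map_smul, smul_mul_assoc, smul_mul_assoc, ← ιMulti_three, ← hc, inv_smul_smul₀ hc0]

end IsPluckerVector

def IsContraction {V : Type*} [AddCommGroup V] [Module ℂ V]
    (K : Module.Dual ℂ V →ₗ[ℂ] ExteriorAlgebra ℂ V →ₗ[ℂ] ExteriorAlgebra ℂ V) : Prop :=
  ∀ (f : Module.Dual ℂ V) (u v w : V),
    K f (ι ℂ u * ι ℂ v * ι ℂ w) =
      f u • (ι ℂ v * ι ℂ w) - f v • (ι ℂ u * ι ℂ w) + f w • (ι ℂ u * ι ℂ v)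

namespace IsContraction

variable {V : Type*} [AddCommGroup V] [Module ℂ V]
  {K : Module.Dual ℂ V →ₗ[ℂ] ExteriorAlgebra ℂ V →ₗ[ℂ] ExteriorAlgebra ℂ V}
  {f : Module.Dual ℂ V} {Λ : Submodule ℂ V} {u : ExteriorAlgebra ℂ V}

theorem apply_eq_zero_of_le_ker (hK : IsContraction K) (hu : IsPluckerVector 3 Λ u)
    (hf : Λ ≤ LinearMap.ker f) : K f u = 0 := by
  obtain ⟨v, rfl, rfl⟩ := hu
  have hv : ∀ j, f (v j) = 0 := fun j ↦ hf (Submodule.subset_span (Set.mem_range_self j))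
  rw [ιMulti_three, hK, hv 0, hv 1, hv 2]
  simp

theorem exists_apply_eq_smul (hK : IsContraction K) (hu : IsPluckerVector 3 Λ u)
    (hΛ : Module.finrank ℂ Λ = 3) (hf : ¬Λ ≤ LinearMap.ker f) :
    ∃ c : ℂ, c ≠ 0 ∧ ∃ w, IsPluckerVector 2 (Λ ⊓ LinearMap.ker f) w ∧ K f u = c • w := by
  have := hu.finiteDimensional
  have hL : Module.finrank ℂ ↥(Λ ⊓ LinearMap.ker f) = 2 := by
    have := Submodule.finrank_inf_ker_add_one hf
    omega
  obtain ⟨w, hw⟩ := IsPluckerVector.exists_of_finrank_eq _ hL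
  obtain ⟨y, hyΛ, hyL, rfl⟩ := hu.exists_eq_ι_mul hΛ hw hL inf_le_left
  have hy : f y ≠ 0 := fun h ↦ hyL ⟨hyΛ, h⟩
  refine ⟨f y, hy, w, hw, ?_⟩
  obtain ⟨v, hvL, rfl⟩ := hw
  have hv : ∀ j, f (v j) = 0 := fun j ↦
    (hvL ▸ Submodule.subset_span (Set.mem_range_self j) : v j ∈ Λ ⊓ LinearMap.ker f).2
  rw [ιMulti_two, ← mul_assoc, hK, hv 0, hv 1]
  simp

end IsContraction

namespace IsPluckerVector

variable {V : Type*} [AddCommGroup V] [Module ℂ V] {Λ Λ' : Submodule ℂ V}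
  {u u' : ExteriorAlgebra ℂ V} {a b : ℂ}

theorem finrank_inf_le_one (hu : IsPluckerVector 3 Λ u) (hΛ : Module.finrank ℂ Λ = 3)
    (hu' : IsPluckerVector 3 Λ' u') (hΛ' : Module.finrank ℂ Λ' = 3) (hne : Λ ≠ Λ')
    (hω : ¬∃ x y z : V, a • u + b • u' = ι ℂ x * ι ℂ y * ι ℂ z) :
    Module.finrank ℂ ↥(Λ ⊓ Λ') ≤ 1 := by
  have := hu.finiteDimensional
  have := hu'.finiteDimensional
  have hlt : Module.finrank ℂ ↥(Λ ⊓ Λ') < 3 := by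
    by_contra! h
    exact hne ((Submodule.eq_of_le_of_finrank_le inf_le_left (hΛ ▸ h)).symm.trans
      (Submodule.eq_of_le_of_finrank_le inf_le_right (hΛ' ▸ h)))
  by_contra! h
  have h2 : Module.finrank ℂ ↥(Λ ⊓ Λ') = 2 := by omega
  obtain ⟨w, hw⟩ := exists_of_finrank_eq _ h2
  obtain ⟨y, -, -, rfl⟩ := hu.exists_eq_ι_mul hΛ hw h2 inf_le_left
  obtain ⟨y', -, -, rfl⟩ := hu'.exists_eq_ι_mul hΛ' hw h2 inf_le_right
  obtain ⟨x₀, x₁, rfl⟩ := hw.exists_eq_ι_mul_ι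
  refine hω ⟨a • y + b • y', x₀, x₁, ?_⟩
  simp only [map_add, map_smul, add_mul, smul_mul_assoc, mul_assoc]

theorem mem_of_ι_mul_smul_add_smul_eq_zero (hu : IsPluckerVector 3 Λ u)
    (hΛ : Module.finrank ℂ Λ = 3) (hu' : IsPluckerVector 3 Λ' u') (hΛ' : Module.finrank ℂ Λ' = 3)
    (hinf : Module.finrank ℂ ↥(Λ ⊓ Λ') ≤ 1) (ha : a ≠ 0) {x : V}
    (h : ι ℂ x * (a • u + b • u') = 0) : x ∈ Λ := by
  rw [mul_add, mul_smul_comm, mul_smul_comm] at h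
  by_contra hxΛ
  have hxΛ' : x ∉ Λ' := fun hx ↦ by
    rw [(hu'.ι_mul_eq_zero_iff hΛ' x).2 hx, smul_zero, add_zero, smul_eq_zero_iff_right ha,
      hu.ι_mul_eq_zero_iff hΛ] at h
    exact hxΛ h
  obtain ⟨hxu, hfin⟩ := hu.ι_mul hΛ hxΛ
  obtain ⟨hxu', hfin'⟩ := hu'.ι_mul hΛ' hxΛ'
  have hb : b ≠ 0 := by
    rintro rfl
    rw [zero_smul, add_zero, smul_eq_zero_iff_right ha] at h
    exact hxu.ne_zero hfin h
  have hspan := hxu.eq_of_eq_smul hfin hxu' hfin'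
    (eq_neg_div_smul_of_smul_add_smul_eq_zero hb h)
  have hle : Λ ⊔ Λ' ≤ ℂ ∙ x ⊔ Λ := sup_le le_sup_right (hspan ▸ le_sup_right)
  have := hu.finiteDimensional
  have := hu'.finiteDimensional
  have := Submodule.finrank_mono hle
  have := Submodule.finrank_sup_add_finrank_inf_eq Λ Λ'
  omega

theorem le_ker_of_contraction_smul_add_smul_eq_zero
    {K : Module.Dual ℂ V →ₗ[ℂ] ExteriorAlgebra ℂ V →ₗ[ℂ] ExteriorAlgebra ℂ V}
    (hK : IsContraction K) {f : Module.Dual ℂ V} (hu : IsPluckerVector 3 Λ u)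
    (hΛ : Module.finrank ℂ Λ = 3) (hu' : IsPluckerVector 3 Λ' u') (hΛ' : Module.finrank ℂ Λ' = 3)
    (hinf : Module.finrank ℂ ↥(Λ ⊓ Λ') ≤ 1) (ha : a ≠ 0) (hb : b ≠ 0)
    (h : K f (a • u + b • u') = 0) : Λ ≤ LinearMap.ker f := by
  rw [map_add, map_smul, map_smul] at h
  by_contra hΛf
  obtain ⟨c, hc, w, hw, hKu⟩ := hK.exists_apply_eq_smul hu hΛ hΛf
  have := hu.finiteDimensional
  have hL := Submodule.finrank_inf_ker_add_one hΛf
  have hw0 := hw.ne_zero (by omega)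
  have hΛ'f : ¬Λ' ≤ LinearMap.ker f := fun hΛ'f ↦ by
    rw [hK.apply_eq_zero_of_le_ker hu' hΛ'f, smul_zero, add_zero, hKu, smul_smul,
      smul_eq_zero_iff_right (mul_ne_zero ha hc)] at h
    exact hw0 h
  obtain ⟨c', hc', w', hw', hKu'⟩ := hK.exists_apply_eq_smul hu' hΛ' hΛ'f
  have := hu'.finiteDimensional
  have hL' := Submodule.finrank_inf_ker_add_one hΛ'f
  rw [hKu, hKu', smul_smul, smul_smul] at h
  have hspan := hw.eq_of_eq_smul (by omega) hw' (by omega)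
    (eq_neg_div_smul_of_smul_add_smul_eq_zero (mul_ne_zero hb hc') h)
  have hle : Λ ⊓ LinearMap.ker f ≤ Λ ⊓ Λ' := le_inf inf_le_left (hspan ▸ inf_le_left)
  have := Submodule.finrank_mono hle
  omega

end IsPluckerVector

/-- for `ω ∈ O₅` with kernel line spanned by `α` and associated hyperplane
`A_ω = ker f`, if `Λ ≠ Λ'` are 3-dimensional subspaces with `π_ω(Λ) = π_ω(Λ')`, then
`Λ ∩ Λ' = ℂα` and `Λ + Λ' = A_ω`. -/
theorem stmt7 {V : Type*} [AddCommGroup V] [Module ℂ V] [FiniteDimensional ℂ V]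
    (hV : Module.finrank ℂ V = 6)
    (ω : ExteriorAlgebra ℂ V) (hω : InO5 ω)
    (α : V) (hα : α ≠ 0)
    (hker : ∀ v : V, ι ℂ v * ω = 0 ↔ v ∈ Submodule.span ℂ {α})
    (K : Module.Dual ℂ V →ₗ[ℂ] ExteriorAlgebra ℂ V →ₗ[ℂ] ExteriorAlgebra ℂ V)
    (hK : ∀ (f : Module.Dual ℂ V) (u v w : V),
      K f (ι ℂ u * ι ℂ v * ι ℂ w) =
        f u • (ι ℂ v * ι ℂ w) - f v • (ι ℂ u * ι ℂ w) + f w • (ι ℂ u * ι ℂ v))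
    (f : Module.Dual ℂ V) (hf : f ≠ 0) (hfω : K f ω = 0)
    (Λ Λ' : Submodule ℂ V)
    (hΛ : Module.finrank ℂ Λ = 3) (hΛ' : Module.finrank ℂ Λ' = 3) (hne : Λ ≠ Λ')
    (u u' : ExteriorAlgebra ℂ V)
    (hu : IsPluckerVector 3 Λ u) (hu' : IsPluckerVector 3 Λ' u')
    (heq : ProjEq (Submodule.span ℂ {ω}) u u') :
    Λ ⊓ Λ' = Submodule.span ℂ {α} ∧ Λ ⊔ Λ' = LinearMap.ker f := by
  obtain ⟨-, hωdec, -⟩ := hω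
  obtain ⟨a, b, ha, hb, rfl⟩ := exists_eq_smul_add_smul_of_span_mkQ_eq heq
    (hu'.notMem_span_singleton hΛ' hωdec) fun c h ↦ hne (hu.eq_of_eq_smul hΛ hu' hΛ' h)
  have hinf := hu.finrank_inf_le_one hΛ hu' hΛ' hne hωdec
  have hinf' : Module.finrank ℂ ↥(Λ' ⊓ Λ) ≤ 1 := inf_comm Λ Λ' ▸ hinf
  have hαω := (hker α).2 (Submodule.mem_span_singleton_self α)
  have hαΛ := hu.mem_of_ι_mul_smul_add_smul_eq_zero hΛ hu' hΛ' hinf ha hαω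
  have hαΛ' := hu'.mem_of_ι_mul_smul_add_smul_eq_zero hΛ' hu hΛ hinf' hb
    (add_comm (a • u) _ ▸ hαω)
  have hinf_eq : Λ ⊓ Λ' = ℂ ∙ α := (Submodule.eq_of_le_of_finrank_le
    ((Submodule.span_singleton_le_iff_mem _ _).2 (Submodule.mem_inf.2 ⟨hαΛ, hαΛ'⟩))
    (by rwa [finrank_span_singleton hα])).symm
  have hΛf := hu.le_ker_of_contraction_smul_add_smul_eq_zero hK hΛ hu' hΛ' hinf ha hb hfω
  have hΛ'f := hu'.le_ker_of_contraction_smul_add_smul_eq_zero hK hΛ' hu hΛ hinf' hb ha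
    (add_comm (a • u) _ ▸ hfω)
  refine ⟨hinf_eq, Submodule.eq_of_le_of_finrank_le (sup_le hΛf hΛ'f) ?_⟩
  have := Submodule.finrank_sup_add_finrank_inf_eq Λ Λ'
  have := Module.Dual.finrank_ker_add_one_of_ne_zero hf
  rw [hinf_eq, finrank_span_singleton hα] at *
  omega
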